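/- Suppose for each level ℓ = 0,…,L the variance of the correction term satisfies V_ℓ ≤ C·2^{-βℓ} and the per-sample cost satisfies C_ℓ ≤ C'·2^{γℓ}, with β > γ > 0. Then, choosing N_ℓ proportional to √(V_ℓ/C_ℓ), the total cost Σ_ℓ N_ℓ C_ℓ needed to achieve Σ_ℓ V_ℓ/N_ℓ ≤ ε² is bounded by a constant times ε^{-2} (up to the rounding of N_ℓ to integers, i.e., with N_ℓ = ⌈ε^{-2}√(V_ℓ/C_ℓ)·Σ_k √(V_k C_k)⌉, total cost ≤ ε^{-2}(Σ_ℓ √(V_ℓ C_ℓ))² + Σ_ℓ C_ℓ). -/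

import Mathlib

open Finset

/-
Allocating `N_ℓ ≈ K √(V_ℓ / C_ℓ)` samples makes both the variance term `V_ℓ / N_ℓ` and the cost
term `N_ℓ C_ℓ` proportional to `√(V_ℓ C_ℓ)`: the lower bound `N_ℓ ≥ K √(V_ℓ / C_ℓ)` gives
`Σ V_ℓ / N_ℓ ≤ (Σ √(V_ℓ C_ℓ)) / K`, and the upper bound `N_ℓ ≤ K √(V_ℓ / C_ℓ) + 1` gives
`Σ N_ℓ C_ℓ ≤ K Σ √(V_ℓ C_ℓ) + Σ C_ℓ`. The ceiling with `K = ε⁻² Σ √(V_k C_k)` satisfies both.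
-/

namespace Real

theorem sqrt_div_mul_self_of_nonneg (x : ℝ) {y : ℝ} (hy : 0 ≤ y) : √(x / y) * y = √(x * y) := by
  rcases hy.eq_or_lt with rfl | hy
  · simp
  · rw [← sqrt_mul_self hy.le, ← sqrt_mul' _ (mul_self_nonneg y), sqrt_mul_self hy.le]
    congr 1
    field_simp

theorem sqrt_div_mul_sqrt_mul {x y : ℝ} (hx : 0 ≤ x) (hy : 0 < y) : √(x / y) * √(x * y) = x := by
  rw [← sqrt_mul' _ (mul_nonneg hx hy.le), show x / y * (x * y) = x * x by field_simp,
    sqrt_mul_self hx]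

end Real

section SampleAllocation

variable {ι : Type*} {s : Finset ι} {V C N : ι → ℝ} {K : ℝ}

theorem sum_div_le_of_sqrt_div_le (hK : 0 < K) (hV : ∀ i ∈ s, 0 < V i) (hC : ∀ i ∈ s, 0 < C i)
    (hN : ∀ i ∈ s, K * √(V i / C i) ≤ N i) :
    ∑ i ∈ s, V i / N i ≤ (∑ i ∈ s, √(V i * C i)) / K := by
  rw [sum_div]
  refine sum_le_sum fun i hi => ?_
  have hq : 0 < √(V i / C i) := Real.sqrt_pos.mpr (div_pos (hV i hi) (hC i hi))
  calc V i / N i ≤ V i / (K * √(V i / C i)) := by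
        gcongr
        exacts [(hV i hi).le, hN i hi]
    _ = √(V i / C i) * √(V i * C i) / (√(V i / C i) * K) := by
        rw [Real.sqrt_div_mul_sqrt_mul (hV i hi).le (hC i hi), mul_comm K]
    _ = √(V i * C i) / K := mul_div_mul_left _ _ hq.ne'

theorem sum_mul_le_of_le_sqrt_div_add_one (hC : ∀ i ∈ s, 0 ≤ C i)
    (hN : ∀ i ∈ s, N i ≤ K * √(V i / C i) + 1) :
    ∑ i ∈ s, N i * C i ≤ K * ∑ i ∈ s, √(V i * C i) + ∑ i ∈ s, C i := by
  rw [mul_sum, ← sum_add_distrib]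
  refine sum_le_sum fun i hi => ?_
  calc N i * C i ≤ (K * √(V i / C i) + 1) * C i := mul_le_mul_of_nonneg_right (hN i hi) (hC i hi)
    _ = K * √(V i * C i) + C i := by
        rw [add_mul, one_mul, mul_assoc, Real.sqrt_div_mul_self_of_nonneg _ (hC i hi)]

end SampleAllocation

theorem stmt_16_general (L : ℕ) (V C : ℕ → ℝ)
    (hV : ∀ ℓ ≤ L, 0 < V ℓ) (hC : ∀ ℓ ≤ L, 0 < C ℓ)
    (ε : ℝ) (hε : 0 < ε)
    (N : ℕ → ℕ)
    (hN : ∀ ℓ ≤ L, N ℓ =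
      ⌈ε ^ (-2 : ℤ) * Real.sqrt (V ℓ / C ℓ) *
        ∑ k ∈ range (L + 1), Real.sqrt (V k * C k)⌉₊) :
    (∑ ℓ ∈ range (L + 1), V ℓ / (N ℓ : ℝ)) ≤ ε ^ 2 ∧
      (∑ ℓ ∈ range (L + 1), (N ℓ : ℝ) * C ℓ) ≤
        ε ^ (-2 : ℤ) * (∑ ℓ ∈ range (L + 1), Real.sqrt (V ℓ * C ℓ)) ^ 2 +
          ∑ ℓ ∈ range (L + 1), C ℓ := by
  set S := ∑ k ∈ range (L + 1), √(V k * C k)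
  simp only [← mem_range_succ_iff] at hV hC hN
  have hS : 0 < S :=
    sum_pos (fun k hk => Real.sqrt_pos.mpr (mul_pos (hV k hk) (hC k hk))) nonempty_range_add_one
  have hK : 0 < ε ^ (-2 : ℤ) * S := by positivity
  have hN' : ∀ ℓ ∈ range (L + 1), (N ℓ : ℝ) = ⌈ε ^ (-2 : ℤ) * S * √(V ℓ / C ℓ)⌉₊ := by
    intro ℓ hℓ
    rw [hN ℓ hℓ, mul_right_comm]
  constructor
  · calc ∑ ℓ ∈ range (L + 1), V ℓ / (N ℓ : ℝ) ≤ S / (ε ^ (-2 : ℤ) * S) :=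
          sum_div_le_of_sqrt_div_le hK hV hC fun ℓ hℓ => (hN' ℓ hℓ).symm ▸ Nat.le_ceil _
      _ = ε ^ 2 := by field_simp
  · calc ∑ ℓ ∈ range (L + 1), (N ℓ : ℝ) * C ℓ ≤ ε ^ (-2 : ℤ) * S * S + ∑ ℓ ∈ range (L + 1), C ℓ :=
          sum_mul_le_of_le_sqrt_div_add_one (fun ℓ hℓ => (hC ℓ hℓ).le) fun ℓ hℓ =>
            (hN' ℓ hℓ).symm ▸ (Nat.ceil_lt_add_one (by positivity)).le
      _ = ε ^ (-2 : ℤ) * S ^ 2 + ∑ ℓ ∈ range (L + 1), C ℓ := by ring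

theorem stmt_16 (L : ℕ) (V C : ℕ → ℝ)
    (hV : ∀ ℓ ≤ L, 0 < V ℓ) (hC : ∀ ℓ ≤ L, 0 < C ℓ)
    (Cb Cb' β γ : ℝ) (hCb : 0 < Cb) (hCb' : 0 < Cb') (hγ : 0 < γ) (hβγ : γ < β)
    (hVbound : ∀ ℓ ≤ L, V ℓ ≤ Cb * 2 ^ (-β * ℓ))
    (hCbound : ∀ ℓ ≤ L, C ℓ ≤ Cb' * 2 ^ (γ * ℓ))
    (ε : ℝ) (hε : 0 < ε)
    (N : ℕ → ℕ)
    (hN : ∀ ℓ ≤ L, N ℓ =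
      ⌈ε ^ (-2 : ℤ) * Real.sqrt (V ℓ / C ℓ) *
        ∑ k ∈ range (L + 1), Real.sqrt (V k * C k)⌉₊) :
    (∑ ℓ ∈ range (L + 1), V ℓ / (N ℓ : ℝ)) ≤ ε ^ 2 ∧
      (∑ ℓ ∈ range (L + 1), (N ℓ : ℝ) * C ℓ) ≤
        ε ^ (-2 : ℤ) * (∑ ℓ ∈ range (L + 1), Real.sqrt (V ℓ * C ℓ)) ^ 2 +
          ∑ ℓ ∈ range (L + 1), C ℓ :=
  stmt_16_general L V C hV hC ε hε N hN
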